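/- Let P be a periodic pattern over {0,…,σ−1} with type(P) = −1, and let s = L-head(P) and H = L-root(P). Define δ(P,T) = |{j ∈ [1..n] : the longest common prefix of T[j..n] and P has length ≥ 3τ−1 and T[j..n] ≺ P}|, δᵃ(P,T) = |{j ∈ R⁻_{s,H} : L-exp(j) ≤ L-exp(P)}|, and δˢ(P,T) = |{j ∈ R⁻_{s,H} : L-exp(j) = L-exp(P) and T[j..n] ⪰ P}|. Then δ(P,T) = δᵃ(P,T) − δˢ(P,T). -/

import Mathlib

open scoped Classical

namespace CSA

/-- Character of a 1-indexed string at position `i` (junk value 0 out of range). -/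
def idx (S : List ℕ) (i : ℕ) : ℕ := S.getD (i - 1) 0

/-- Substring `S[i..j)` in the 1-indexed, half-open convention. -/
def sub (S : List ℕ) (i j : ℕ) : List ℕ := (S.drop (i - 1)).take (j - i)

/-- Suffix `S[i..|S|]` (1-indexed). -/
def suf (S : List ℕ) (i : ℕ) : List ℕ := S.drop (i - 1)

/-- Length of the longest common prefix of two strings. -/
def lcp (A B : List ℕ) : ℕ := ((A.zip B).takeWhile fun p => p.1 == p.2).length

/-- `LCE T j₁ j₂` is the length of the longest common prefix of `T[j₁..n]` and `T[j₂..n]`. -/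
def LCE (T : List ℕ) (j₁ j₂ : ℕ) : ℕ := lcp (suf T j₁) (suf T j₂)

/-- `p` is a period of `S`. -/
def IsPeriod (S : List ℕ) (p : ℕ) : Prop :=
  1 ≤ p ∧ p ≤ S.length ∧ ∀ i, i + p < S.length → S.getD i 0 = S.getD (i + p) 0

/-- The shortest period of `S`. -/
noncomputable def per (S : List ℕ) : ℕ := sInf {p | IsPeriod S p}

/-- `R = {i ∈ [1..n−3τ+2] : per(T[i..i+3τ−1)) ≤ τ/3}`. -/
noncomputable def R (T : List ℕ) (τ : ℕ) : Set ℕ :=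
  {i | 1 ≤ i ∧ i + 3 * τ ≤ T.length + 2 ∧ 3 * per (sub T i (i + 3 * τ - 1)) ≤ τ}

/-- `rend(j) = min{j′ ≥ j : j′ ∉ R} + 3τ − 2`. -/
noncomputable def rend (T : List ℕ) (τ j : ℕ) : ℕ :=
  sInf {j' | j ≤ j' ∧ j' ∉ R T τ} + 3 * τ - 2

/-- `L-root(j)`: lexicographically smallest among `{T[j+t..j+t+p) : 0 ≤ t < p}`
where `p = per(T[j..j+3τ−1))`. -/
noncomputable def Lroot (T : List ℕ) (τ j : ℕ) : List ℕ :=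
  (((Finset.range (per (sub T j (j + 3 * τ - 1)))).image fun t =>
      sub T (j + t) (j + t + per (sub T j (j + 3 * τ - 1)))).min).untopD []

/-- `L-head(j)`: the (unique) `s ∈ [0..p)` with `T[j+s..j+s+p) = L-root(j)`. -/
noncomputable def Lhead (T : List ℕ) (τ j : ℕ) : ℕ :=
  sInf {s | s < per (sub T j (j + 3 * τ - 1)) ∧
    sub T (j + s) (j + s + per (sub T j (j + 3 * τ - 1))) = Lroot T τ j}

noncomputable def Lexp (T : List ℕ) (τ j : ℕ) : ℕ :=
  (rend T τ j - j - Lhead T τ j) / per (sub T j (j + 3 * τ - 1))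

noncomputable def Ltail (T : List ℕ) (τ j : ℕ) : ℕ :=
  (rend T τ j - j - Lhead T τ j) % per (sub T j (j + 3 * τ - 1))

noncomputable def rendfull (T : List ℕ) (τ j : ℕ) : ℕ := rend T τ j - Ltail T τ j

/-- `type(j) = +1` if `rend(j) ≤ n` and `T[rend(j)] > T[rend(j)−p]`, and `−1` otherwise. -/
noncomputable def typ (T : List ℕ) (τ j : ℕ) : ℤ :=
  if rend T τ j ≤ T.length ∧
      idx T (rend T τ j - per (sub T j (j + 3 * τ - 1))) < idx T (rend T τ j)
    then 1 else -1

noncomputable def Rminus (T : List ℕ) (τ : ℕ) : Set ℕ := {j ∈ R T τ | typ T τ j = -1}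

noncomputable def RH (T : List ℕ) (τ : ℕ) (H : List ℕ) : Set ℕ :=
  {j ∈ R T τ | Lroot T τ j = H}

noncomputable def RsH (T : List ℕ) (τ s : ℕ) (H : List ℕ) : Set ℕ :=
  {j ∈ R T τ | Lroot T τ j = H ∧ Lhead T τ j = s}

noncomputable def RminusH (T : List ℕ) (τ : ℕ) (H : List ℕ) : Set ℕ :=
  Rminus T τ ∩ RH T τ H

noncomputable def RminusSH (T : List ℕ) (τ s : ℕ) (H : List ℕ) : Set ℕ :=
  Rminus T τ ∩ RsH T τ s H

noncomputable def Rprime (T : List ℕ) (τ : ℕ) : Set ℕ := {j ∈ R T τ | j - 1 ∉ R T τ}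

/-- `Occ(P,S)`: the set of (1-indexed) starting positions of occurrences of `P` in `S`. -/
def OccSet (P S : List ℕ) : Set ℕ :=
  {j | 1 ≤ j ∧ j + P.length ≤ S.length + 1 ∧ sub S j (j + P.length) = P}

noncomputable def RangeBeg (P T : List ℕ) : ℕ :=
  Set.ncard {i | 1 ≤ i ∧ i ≤ T.length ∧ suf T i < P}

noncomputable def RangeEnd (P T : List ℕ) : ℕ := RangeBeg P T + (OccSet P T).ncard

/-- `ISA[j]`: the lexicographic rank of the suffix `T[j..n]` among all suffixes of `T`. -/
noncomputable def ISA (T : List ℕ) (j : ℕ) : ℕ :=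
  Set.ncard {j' | 1 ≤ j' ∧ j' ≤ T.length ∧ suf T j' ≤ suf T j}

/-- `succ_S(i) = min{j ∈ S ∪ {n−2τ+2} : j ≥ i}`. -/
noncomputable def succS (T : List ℕ) (τ : ℕ) (Sync : Set ℕ) (i : ℕ) : ℕ :=
  sInf {j | i ≤ j ∧ (j ∈ Sync ∨ j = T.length + 2 - 2 * τ)}

/-- The set `D` of distinguishing prefixes. -/
noncomputable def Dset (T : List ℕ) (τ : ℕ) (Sync : Set ℕ) : Set (List ℕ) :=
  {X | ∃ i, 1 ≤ i ∧ i + 3 * τ ≤ T.length + 2 ∧ i ∉ R T τ ∧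
    X = sub T i (succS T τ Sync i + 2 * τ)}

/-- `T^∞[i] = T[1 + ((i−1) mod n)]` for `i : ℤ`. -/
def tinf (T : List ℕ) (i : ℤ) : ℕ := idx T (((i - 1).emod (T.length : ℤ)).toNat + 1)

/-- `W[i]`: the reverse of `T^∞[s^lex_i − τ .. s^lex_i + 2τ)`. -/
def Wstr (T : List ℕ) (τ : ℕ) (slex : ℕ → ℕ) (i : ℕ) : List ℕ :=
  ((List.range (3 * τ)).map fun k => tinf T ((slex i : ℤ) - (τ : ℤ) + (k : ℤ))).reverse

/- Pattern versions of the `L`-decomposition functions. -/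

noncomputable def perP (τ : ℕ) (P : List ℕ) : ℕ := per (P.take (3 * τ - 1))

/-- A pattern is periodic if `|P| ≥ 3τ−1` and `per(P[1..3τ−1]) ≤ τ/3`. -/
noncomputable def Periodic (τ : ℕ) (P : List ℕ) : Prop :=
  3 * τ - 1 ≤ P.length ∧ 3 * perP τ P ≤ τ

noncomputable def pend (τ : ℕ) (P : List ℕ) : ℕ :=
  1 + perP τ P + lcp P (P.drop (perP τ P))

noncomputable def LrootP (τ : ℕ) (P : List ℕ) : List ℕ :=
  (((Finset.range (perP τ P)).image fun t => (P.drop t).take (perP τ P)).min).untopD []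

noncomputable def LheadP (τ : ℕ) (P : List ℕ) : ℕ :=
  sInf {s | s < perP τ P ∧ (P.drop s).take (perP τ P) = LrootP τ P}

noncomputable def LexpP (τ : ℕ) (P : List ℕ) : ℕ :=
  (pend τ P - 1 - LheadP τ P) / perP τ P

noncomputable def LtailP (τ : ℕ) (P : List ℕ) : ℕ :=
  (pend τ P - 1 - LheadP τ P) % perP τ P

noncomputable def pendfullP (τ : ℕ) (P : List ℕ) : ℕ := pend τ P - LtailP τ P

noncomputable def typP (τ : ℕ) (P : List ℕ) : ℤ :=
  if pend τ P ≤ P.length ∧ idx P (pend τ P - perP τ P) < idx P (pend τ P)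
    then 1 else -1

/-- `pow(H)`: the prefix of length `|H|·⌈τ/|H|⌉` of `H^∞`. -/
def powS (τ : ℕ) (H : List ℕ) : List ℕ :=
  (List.replicate ((τ + H.length - 1) / H.length) H).flatten

/-!
For `j ∈ R`, the run of `R` starting at `j` is exactly the longest prefix of `T[j..n]` with
period `p = per(T[j..j+3τ-1))`: neighbouring windows of `R` have periods `p, q ≤ τ/3`, and as
`p + q` is shorter than a window, the two periods commute and `p` propagates. Hence root, head,
exponent and type of `j` are those of the pattern `T[j..n]`, and the lemma becomes a statement
about two periodic strings `X` and `P` with the same root and head. Both follow the same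
periodic pattern until the shorter run ends, so `X ≺ P` is decided there: by the type of `X`
if its run ends first, and never in favour of `X` if the run of `P` ends first, since `P` has
type `-1`. With equal exponents nothing more can be said, which is what `δˢ` corrects for.
-/
lemma getD_drop (l : List ℕ) (a i : ℕ) : (l.drop a).getD i 0 = l.getD (a + i) 0 := by
  simp [List.getD_eq_getElem?_getD, List.getElem?_drop]

lemma getD_take (l : List ℕ) {k i : ℕ} (h : i < k) : (l.take k).getD i 0 = l.getD i 0 := by
  simp [List.getD_eq_getElem?_getD, h]

lemma take_drop_eq_take_drop_take (l : List ℕ) {t p k : ℕ} (h : t + p ≤ k) :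
    (l.drop t).take p = ((l.take k).drop t).take p := by
  rw [List.drop_take, List.take_take, Nat.min_eq_left (by omega)]

lemma lt_of_getD_eq_of_getD_lt : ∀ (A B : List ℕ) (k : ℕ),
    (∀ i < k, A.getD i 0 = B.getD i 0) → k ≤ A.length → k < B.length →
    (k < A.length → A.getD k 0 < B.getD k 0) → A < B
  | [], _ :: _, _, _, _, _, _ => List.Lex.nil
  | a :: A, b :: B, 0, _, _, _, hlt => List.Lex.rel (by simpa using hlt (by simp))
  | a :: A, b :: B, k + 1, h, hA, hB, hlt => by
    obtain rfl : a = b := by simpa using h 0 (Nat.succ_pos _)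
    exact List.Lex.cons (lt_of_getD_eq_of_getD_lt A B k
      (fun i hi => by simpa using h (i + 1) (by omega))
      (by simpa using hA) (by simpa using hB) (fun hk => by simpa using hlt (by simpa using hk)))
  | _, [], _, _, _, hB, _ => absurd hB (by simp)

section Lcp

lemma lcp_cons (a b : ℕ) (A B : List ℕ) :
    lcp (a :: A) (b :: B) = if a = b then lcp A B + 1 else 0 := by
  simp only [lcp, List.zip_cons_cons, List.takeWhile_cons]
  by_cases h : a = b <;> simp [h]

lemma lcp_le_length_left : ∀ A B : List ℕ, lcp A B ≤ A.length
  | [], _ | _ :: _, [] => by simp [lcp]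
  | a :: A, b :: B => by
    rw [lcp_cons]; split_ifs
    · simpa using lcp_le_length_left A B
    · simp

lemma lcp_le_length_right : ∀ A B : List ℕ, lcp A B ≤ B.length
  | [], _ | _ :: _, [] => by simp [lcp]
  | a :: A, b :: B => by
    rw [lcp_cons]; split_ifs
    · simpa using lcp_le_length_right A B
    · simp

lemma getD_eq_of_lt_lcp : ∀ (A B : List ℕ) (i : ℕ), i < lcp A B → A.getD i 0 = B.getD i 0
  | [], _, _, h | _ :: _, [], _, h => by simp [lcp] at h
  | a :: A, b :: B, i, h => by
    rw [lcp_cons] at h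
    split_ifs at h with hab
    · cases i with
      | zero => simp [hab]
      | succ i => simpa using getD_eq_of_lt_lcp A B i (by omega)
    · simp at h

lemma getD_lcp_ne : ∀ (A B : List ℕ), lcp A B < A.length → lcp A B < B.length →
    A.getD (lcp A B) 0 ≠ B.getD (lcp A B) 0
  | [], _, h, _ | _ :: _, [], _, h => by simp at h
  | a :: A, b :: B, h1, h2 => by
    by_cases hab : a = b
    · simp only [lcp_cons, if_pos hab, List.length_cons] at h1 h2 ⊢
      simpa using getD_lcp_ne A B (by omega) (by omega)
    · simp [lcp_cons, hab]

lemma le_lcp : ∀ (A B : List ℕ) (k : ℕ), k ≤ A.length → k ≤ B.length →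
    (∀ i < k, A.getD i 0 = B.getD i 0) → k ≤ lcp A B
  | _, _, 0, _, _, _ => Nat.zero_le _
  | [], _, _ + 1, hA, _, _ | _ :: _, [], _ + 1, _, hB, _ => by simp_all
  | a :: A, b :: B, k + 1, hA, hB, h => by
    have hab : a = b := by simpa using h 0 (Nat.succ_pos _)
    rw [lcp_cons, if_pos hab]
    have := le_lcp A B k (by simpa using hA) (by simpa using hB)
      (fun i hi => by simpa using h (i + 1) (by omega))
    omega

lemma take_eq_take_of_le_lcp {A B : List ℕ} {k : ℕ} (h : k ≤ lcp A B) :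
    A.take k = B.take k := by
  apply List.ext_getElem
  · have := lcp_le_length_left A B; have := lcp_le_length_right A B; simp; omega
  · intro i h1 h2
    simp only [List.length_take] at h1 h2
    have := getD_eq_of_lt_lcp A B i (by omega)
    simp_all

end Lcp

section Period

def HasPeriodOn (X : List ℕ) (p a : ℕ) : Prop :=
  ∀ i, i + p < a → X.getD i 0 = X.getD (i + p) 0

/-- `X[0, a)` is the longest prefix of `X` with period `p`. -/
def IsMaximalRun (X : List ℕ) (p a : ℕ) : Prop :=
  p ≤ a ∧ a ≤ X.length ∧ HasPeriodOn X p a ∧ (a < X.length → X.getD a 0 ≠ X.getD (a - p) 0)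

variable {X : List ℕ} {p q a b d k : ℕ}

lemma hasPeriodOn_drop_iff :
    HasPeriodOn (X.drop d) p k ↔ ∀ i, i + p < k → X.getD (d + i) 0 = X.getD (d + i + p) 0 := by
  simp only [HasPeriodOn, getD_drop, Nat.add_assoc]

lemma HasPeriodOn.getD_add_mul (h : HasPeriodOn X p a) (k : ℕ) :
    ∀ i, i + k * p < a → X.getD i 0 = X.getD (i + k * p) 0 := by
  induction k with
  | zero => simp
  | succ k ih =>
    intro i hi
    rw [Nat.succ_mul, ← Nat.add_assoc] at hi ⊢
    rw [ih i (by omega), h _ hi]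

lemma HasPeriodOn.succ (h : HasPeriodOn X p a) (hpa : p ≤ a)
    (heq : X.getD (a - p) 0 = X.getD a 0) : HasPeriodOn X p (a + 1) := by
  intro i hi
  rcases Nat.lt_or_ge (i + p) a with hlt | hge
  · exact h i hlt
  · obtain rfl : i = a - p := by omega
    rwa [Nat.sub_add_cancel hpa]

/-- Periods `p` and `q` with `p + q < k` commute on a window of length `k`. -/
lemma HasPeriodOn.extend (hX : HasPeriodOn X p (d + k)) (hW : HasPeriodOn (X.drop (d + 1)) q k)
    (hq : 0 < q) (hpq : p + q < k) : HasPeriodOn X p (d + k + 1) := by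
  refine hX.succ (by omega) ?_
  rw [hasPeriodOn_drop_iff] at hW
  have e₁ := hW (k - 1 - q) (by omega)
  have e₂ := hX (d + k - q - p) (by omega)
  have e₃ := hW (k - 1 - p - q) (by omega)
  rw [show d + 1 + (k - 1 - q) = d + k - q by omega,
    show d + k - q + q = d + k by omega] at e₁
  rw [show d + k - q - p + p = d + k - q by omega] at e₂
  rw [show d + 1 + (k - 1 - p - q) = d + k - q - p by omega,
    show d + k - q - p + q = d + k - p by omega] at e₃
  rw [← e₃, e₂, e₁]

lemma isPeriod_take (h : HasPeriodOn X p k) (hp : 0 < p) (hpk : p ≤ k) (hk : k ≤ X.length) :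
    IsPeriod (X.take k) p := by
  refine ⟨hp, by simp; omega, fun i hi => ?_⟩
  simp only [List.length_take] at hi
  rw [getD_take _ (by omega), getD_take _ (by omega)]
  exact h i (by omega)

lemma IsMaximalRun.le_of_hasPeriodOn (ha : IsMaximalRun X p a) (hb : HasPeriodOn X p b)
    (hbX : b ≤ X.length) : b ≤ a := by
  by_contra! hab
  obtain ⟨hpa, -, -, hbreak⟩ := ha
  have := hb (a - p) (by omega)
  rw [Nat.sub_add_cancel hpa] at this
  exact hbreak (by omega) this.symm

lemma IsMaximalRun.unique (ha : IsMaximalRun X p a) (hb : IsMaximalRun X p b) : a = b :=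
  le_antisymm (hb.le_of_hasPeriodOn ha.2.2.1 ha.2.1) (ha.le_of_hasPeriodOn hb.2.2.1 hb.2.1)

lemma getD_eq_of_hasPeriodOn {Y : List ℕ} {s : ℕ} (hX : HasPeriodOn X p a)
    (hY : HasPeriodOn Y p b) (hs : s < p) (hsa : s + p ≤ a) (hsb : s + p ≤ b)
    (hblock : (X.drop s).take p = (Y.drop s).take p) :
    ∀ i, i < a → i < b → X.getD i 0 = Y.getD i 0 := by
  have hblock' : ∀ r < p, X.getD (s + r) 0 = Y.getD (s + r) 0 := fun r hr => by
    simpa only [getD_take _ hr, getD_drop] using congrArg (·.getD r 0) hblock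
  intro i hia hib
  rcases Nat.lt_or_ge i s with his | his
  · rw [hX i (by omega), hY i (by omega), show i + p = s + (i + p - s) by omega]
    exact hblock' _ (by omega)
  · have hi : i = s + (i - s) % p + (i - s) / p * p := by
      have := Nat.mod_add_div (i - s) p; rw [Nat.mul_comm] at this; omega
    rw [hi, ← hX.getD_add_mul _ _ (by omega), ← hY.getD_add_mul _ _ (by omega)]
    exact hblock' _ (Nat.mod_lt _ (by omega))

end Period

section Pattern

variable {τ : ℕ} {X Y : List ℕ}

lemma isPeriod_per {S : List ℕ} (h : S ≠ []) : IsPeriod S (per S) :=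
  Nat.sInf_mem (s := {p | IsPeriod S p})
    ⟨S.length, List.length_pos_iff.2 h, le_rfl, fun _ _ => by omega⟩

lemma per_le {S : List ℕ} {p : ℕ} (h : IsPeriod S p) : per S ≤ p := Nat.sInf_le h

namespace Periodic

lemma isPeriod_take (hτ : 1 ≤ τ) (hX : Periodic τ X) :
    IsPeriod (X.take (3 * τ - 1)) (perP τ X) :=
  isPeriod_per (List.ne_nil_of_length_pos (by have := hX.1; simp; omega))

lemma perP_pos (hτ : 1 ≤ τ) (hX : Periodic τ X) : 0 < perP τ X :=
  (hX.isPeriod_take hτ).1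

lemma hasPeriodOn (hτ : 1 ≤ τ) (hX : Periodic τ X) : HasPeriodOn X (perP τ X) (3 * τ - 1) := by
  intro i hi
  have := (hX.isPeriod_take hτ).2.2 i (by have := hX.1; simp; omega)
  rwa [getD_take _ (by omega), getD_take _ (by omega)] at this

lemma exists_take_drop_eq_LrootP (hτ : 1 ≤ τ) (hX : Periodic τ X) :
    ∃ t < perP τ X, (X.drop t).take (perP τ X) = LrootP τ X := by
  have hne : ((Finset.range (perP τ X)).image fun t => (X.drop t).take (perP τ X)).Nonempty :=
    (Finset.nonempty_range_iff.2 (hX.perP_pos hτ).ne').image _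
  rw [LrootP, ← Finset.coe_min' hne]
  simpa using Finset.min'_mem _ hne

lemma LheadP_spec (hτ : 1 ≤ τ) (hX : Periodic τ X) :
    LheadP τ X < perP τ X ∧ (X.drop (LheadP τ X)).take (perP τ X) = LrootP τ X :=
  Nat.sInf_mem (hX.exists_take_drop_eq_LrootP hτ)

lemma length_LrootP (hτ : 1 ≤ τ) (hX : Periodic τ X) : (LrootP τ X).length = perP τ X := by
  obtain ⟨t, ht, e⟩ := hX.exists_take_drop_eq_LrootP hτ
  rw [← e]
  have := hX.1; have := hX.2
  simp; omega

lemma isMaximalRun_pend (hτ : 1 ≤ τ) (hX : Periodic τ X) :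
    IsMaximalRun X (perP τ X) (pend τ X - 1) := by
  set p := perP τ X
  have hpX : p ≤ X.length := by have := hX.1; have := hX.2; omega
  have hl := lcp_le_length_right X (X.drop p)
  simp only [List.length_drop] at hl
  have hpend : pend τ X - 1 = p + lcp X (X.drop p) := by simp only [pend, p]; omega
  refine ⟨by omega, by omega, fun i hi => ?_, fun h => ?_⟩
  · rw [getD_eq_of_lt_lcp X (X.drop p) i (by omega), getD_drop, Nat.add_comm]
  · have := getD_lcp_ne X (X.drop p) (by omega) (by simp; omega)
    rw [getD_drop] at this
    rw [hpend, Nat.add_sub_cancel_left]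
    exact fun e => this (by rw [← e, Nat.add_comm])

lemma le_pend (hτ : 1 ≤ τ) (hX : Periodic τ X) : 3 * τ - 1 ≤ pend τ X - 1 :=
  (hX.isMaximalRun_pend hτ).le_of_hasPeriodOn (hX.hasPeriodOn hτ) hX.1

end Periodic

lemma typP_eq_one_iff : typP τ X = 1 ↔
    pend τ X - 1 < X.length ∧ X.getD (pend τ X - 1 - perP τ X) 0 < X.getD (pend τ X - 1) 0 := by
  have hpend : 1 ≤ pend τ X := by unfold pend; omega
  simp only [typP, idx, Nat.sub_right_comm _ (perP τ X) 1]
  split_ifs with h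
  · exact iff_of_true rfl ⟨by omega, h.2⟩
  · exact iff_of_false (by decide) fun h' => h ⟨by omega, h'.2⟩

lemma typP_eq_neg_one_iff : typP τ X = -1 ↔ typP τ X ≠ 1 := by
  unfold typP; split_ifs <;> decide

end Pattern

section Compare

variable {τ : ℕ} {X Y : List ℕ}

lemma perP_eq_of_LrootP_eq (hτ : 1 ≤ τ) (hX : Periodic τ X) (hY : Periodic τ Y)
    (hroot : LrootP τ X = LrootP τ Y) : perP τ X = perP τ Y := by
  rw [← hX.length_LrootP hτ, ← hY.length_LrootP hτ, hroot]

lemma getD_eq_of_LrootP_eq (hτ : 1 ≤ τ) (hX : Periodic τ X) (hY : Periodic τ Y)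
    (hroot : LrootP τ X = LrootP τ Y) (hhead : LheadP τ X = LheadP τ Y) :
    ∀ i, i < pend τ X - 1 → i < pend τ Y - 1 → X.getD i 0 = Y.getD i 0 := by
  have hp := perP_eq_of_LrootP_eq hτ hX hY hroot
  have hsX := hX.LheadP_spec hτ
  have hsY := hY.LheadP_spec hτ
  have hrunY := (hY.isMaximalRun_pend hτ).2.2.1
  rw [← hp] at hrunY
  have := hX.le_pend hτ; have := hY.le_pend hτ; have := hX.2
  refine getD_eq_of_hasPeriodOn (hX.isMaximalRun_pend hτ).2.2.1 hrunY hsX.1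
    (by omega) (by omega) ?_
  rw [hsX.2, hhead, hp, hsY.2, hroot]

lemma getD_pend_eq_of_pend_lt (hτ : 1 ≤ τ) (hX : Periodic τ X) (hY : Periodic τ Y)
    (hroot : LrootP τ X = LrootP τ Y) (hhead : LheadP τ X = LheadP τ Y)
    (hlt : pend τ X < pend τ Y) :
    Y.getD (pend τ X - 1) 0 = X.getD (pend τ X - 1 - perP τ X) 0 := by
  have hp := perP_eq_of_LrootP_eq hτ hX hY hroot
  have hpa := (hX.isMaximalRun_pend hτ).1
  have := hX.le_pend hτ; have := hX.perP_pos hτ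
  have hrunY := (hY.isMaximalRun_pend hτ).2.2.1
  rw [← hp] at hrunY
  have hper := hrunY (pend τ X - 1 - perP τ X) (by omega)
  rw [Nat.sub_add_cancel hpa] at hper
  rw [← hper, getD_eq_of_LrootP_eq hτ hX hY hroot hhead _ (by omega) (by omega)]

lemma le_lcp_of_LrootP_eq (hτ : 1 ≤ τ) (hX : Periodic τ X) (hY : Periodic τ Y)
    (hroot : LrootP τ X = LrootP τ Y) (hhead : LheadP τ X = LheadP τ Y) :
    3 * τ - 1 ≤ lcp X Y := by
  have := hX.le_pend hτ; have := hY.le_pend hτ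
  exact le_lcp X Y _ hX.1 hY.1 fun i hi =>
    getD_eq_of_LrootP_eq hτ hX hY hroot hhead i (by omega) (by omega)

lemma lt_of_typP_eq_neg_one_of_pend_lt (hτ : 1 ≤ τ) (hX : Periodic τ X) (hY : Periodic τ Y)
    (hroot : LrootP τ X = LrootP τ Y) (hhead : LheadP τ X = LheadP τ Y)
    (htX : typP τ X = -1) (hlt : pend τ X < pend τ Y) : X < Y := by
  obtain ⟨-, haX, -, hbreak⟩ := hX.isMaximalRun_pend hτ
  have hbY := (hY.isMaximalRun_pend hτ).2.1
  have := hX.le_pend hτ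
  have hnot := mt typP_eq_one_iff.2 (typP_eq_neg_one_iff.1 htX)
  refine lt_of_getD_eq_of_getD_lt X Y (pend τ X - 1)
    (fun i hi => getD_eq_of_LrootP_eq hτ hX hY hroot hhead i hi (by omega)) haX (by omega)
    fun ha => ?_
  rw [getD_pend_eq_of_pend_lt hτ hX hY hroot hhead hlt]
  exact lt_of_le_of_ne (not_lt.1 fun h => hnot ⟨ha, h⟩) (hbreak ha)

lemma lt_of_typP_eq_one (hτ : 1 ≤ τ) (hX : Periodic τ X) (hY : Periodic τ Y)
    (hroot : LrootP τ X = LrootP τ Y) (hhead : LheadP τ X = LheadP τ Y)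
    (htX : typP τ X = 1) (hle : pend τ X ≤ pend τ Y)
    (htY : pend τ X = pend τ Y → typP τ Y = -1) : Y < X := by
  have hbY := (hY.isMaximalRun_pend hτ).2.1
  have := hX.le_pend hτ; have := hX.perP_pos hτ
  have hp := perP_eq_of_LrootP_eq hτ hX hY hroot
  have hagree := getD_eq_of_LrootP_eq hτ hX hY hroot hhead
  obtain ⟨haX, hasc⟩ := typP_eq_one_iff.1 htX
  refine lt_of_getD_eq_of_getD_lt Y X (pend τ X - 1)
    (fun i hi => (hagree i hi (by omega)).symm) (by omega) haX fun ha => ?_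
  refine lt_of_le_of_lt ?_ hasc
  rcases Nat.lt_or_ge (pend τ X) (pend τ Y) with hlt | hge
  · exact (getD_pend_eq_of_pend_lt hτ hX hY hroot hhead hlt).le
  · have heq : pend τ X = pend τ Y := by omega
    have hnot := mt typP_eq_one_iff.2 (typP_eq_neg_one_iff.1 (htY heq))
    rw [hagree _ (by omega) (by omega), hp, heq]
    rw [heq] at ha
    exact not_lt.1 fun h => hnot ⟨ha, h⟩

lemma typP_eq_neg_one_and_pend_le_of_lt (hτ : 1 ≤ τ) (hX : Periodic τ X) (hY : Periodic τ Y)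
    (hroot : LrootP τ X = LrootP τ Y) (hhead : LheadP τ X = LheadP τ Y)
    (htY : typP τ Y = -1) (hlt : X < Y) : typP τ X = -1 ∧ pend τ X ≤ pend τ Y := by
  have hle : pend τ X ≤ pend τ Y := not_lt.1 fun h => List.lt_asymm hlt <|
    lt_of_typP_eq_neg_one_of_pend_lt hτ hY hX hroot.symm hhead.symm htY h
  refine ⟨typP_eq_neg_one_iff.2 fun htX => List.lt_asymm hlt ?_, hle⟩
  exact lt_of_typP_eq_one hτ hX hY hroot hhead htX hle fun _ => htY

end Compare

section Prefix

variable {τ : ℕ} {X Y : List ℕ}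

/-- Root and head only read the first `3τ - 1` letters. -/
lemma Periodic.of_take_eq (hY : Periodic τ Y) (hlen : 3 * τ - 1 ≤ X.length)
    (h : X.take (3 * τ - 1) = Y.take (3 * τ - 1)) :
    Periodic τ X ∧ LrootP τ X = LrootP τ Y ∧ LheadP τ X = LheadP τ Y := by
  have hp : perP τ X = perP τ Y := by unfold perP; rw [h]
  have hrot : ∀ t < perP τ Y, (X.drop t).take (perP τ Y) = (Y.drop t).take (perP τ Y) :=
    fun t ht => by
      have := hY.2
      rw [take_drop_eq_take_drop_take X (k := 3 * τ - 1) (by omega),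
        take_drop_eq_take_drop_take Y (k := 3 * τ - 1) (by omega), h]
  have hroot : LrootP τ X = LrootP τ Y := by
    unfold LrootP; rw [hp]
    congr 2
    exact Finset.image_congr fun t ht => hrot t (Finset.mem_range.1 ht)
  refine ⟨⟨hlen, hp ▸ hY.2⟩, hroot, ?_⟩
  unfold LheadP; rw [hp, hroot]
  congr 1; ext s
  exact and_congr_right fun hs => by rw [hrot s hs]

lemma LexpP_le_LexpP (hp : perP τ X = perP τ Y) (hs : LheadP τ X = LheadP τ Y)
    (h : pend τ X ≤ pend τ Y) : LexpP τ X ≤ LexpP τ Y := by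
  unfold LexpP; rw [hp, hs]; exact Nat.div_le_div_right (by omega)

lemma le_lcp_and_lt_iff (hτ : 1 ≤ τ) (hY : Periodic τ Y) (htY : typP τ Y = -1) :
    (3 * τ - 1 ≤ lcp X Y ∧ X < Y) ↔
      (Periodic τ X ∧ typP τ X = -1 ∧ LrootP τ X = LrootP τ Y ∧ LheadP τ X = LheadP τ Y) ∧
        (LexpP τ X < LexpP τ Y ∨ (LexpP τ X = LexpP τ Y ∧ X < Y)) := by
  constructor
  · rintro ⟨hlcp, hlt⟩
    obtain ⟨hX, hroot, hhead⟩ := hY.of_take_eq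
      ((lcp_le_length_left X Y).trans' hlcp) (take_eq_take_of_le_lcp hlcp)
    obtain ⟨htX, hle⟩ := typP_eq_neg_one_and_pend_le_of_lt hτ hX hY hroot hhead htY hlt
    have hexp := LexpP_le_LexpP (perP_eq_of_LrootP_eq hτ hX hY hroot) hhead hle
    exact ⟨⟨hX, htX, hroot, hhead⟩, hexp.lt_or_eq.imp_right fun h => ⟨h, hlt⟩⟩
  · rintro ⟨⟨hX, htX, hroot, hhead⟩, hexp⟩
    refine ⟨le_lcp_of_LrootP_eq hτ hX hY hroot hhead, ?_⟩
    refine hexp.elim (fun hlt => ?_) And.right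
    refine lt_of_typP_eq_neg_one_of_pend_lt hτ hX hY hroot hhead htX (not_le.1 fun hle => ?_)
    exact hlt.not_ge (LexpP_le_LexpP (perP_eq_of_LrootP_eq hτ hX hY hroot).symm hhead.symm hle)

end Prefix

section Text

variable {T : List ℕ} {τ j : ℕ}

lemma suf_add (hj : 1 ≤ j) (d : ℕ) : suf T (j + d) = (suf T j).drop d := by
  simp only [suf, List.drop_drop]; congr 1; omega

lemma getD_suf (T : List ℕ) (j i : ℕ) : (suf T j).getD i 0 = T.getD (j - 1 + i) 0 :=
  getD_drop _ _ _

lemma sub_eq_take_drop_suf (hj : 1 ≤ j) (t k : ℕ) :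
    sub T (j + t) k = ((suf T j).drop t).take (k - (j + t)) := by
  rw [← suf_add hj]; rfl

lemma per_window_eq : per (sub T j (j + 3 * τ - 1)) = perP τ (suf T j) := by
  simp only [sub, suf, perP]; congr 2; omega

lemma mem_R_iff (hτ : 1 ≤ τ) : j ∈ R T τ ↔ 1 ≤ j ∧ Periodic τ (suf T j) := by
  simp only [R, Periodic, Set.mem_ofPred_eq, per_window_eq, suf, List.length_drop]
  constructor
  · rintro ⟨h1, h2, h3⟩; exact ⟨h1, by omega, h3⟩
  · rintro ⟨h1, h2, h3⟩; exact ⟨h1, by omega, h3⟩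

lemma Lroot_eq (hj : 1 ≤ j) : Lroot T τ j = LrootP τ (suf T j) := by
  unfold Lroot LrootP
  simp only [per_window_eq, sub_eq_take_drop_suf hj, Nat.add_sub_cancel_left]

lemma Lhead_eq (hj : 1 ≤ j) : Lhead T τ j = LheadP τ (suf T j) := by
  unfold Lhead LheadP
  simp only [per_window_eq, sub_eq_take_drop_suf hj, Nat.add_sub_cancel_left, Lroot_eq hj]

end Text

section Run

variable {T : List ℕ} {τ j : ℕ}

noncomputable def firstNotInR (T : List ℕ) (τ j : ℕ) : ℕ := sInf {j' | j ≤ j' ∧ j' ∉ R T τ}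

lemma rend_eq (T : List ℕ) (τ j : ℕ) : rend T τ j = firstNotInR T τ j + 3 * τ - 2 := rfl

lemma firstNotInR_mem (j : ℕ) :
    j ≤ firstNotInR T τ j ∧ firstNotInR T τ j ∉ R T τ :=
  Nat.sInf_mem (s := {j' | j ≤ j' ∧ j' ∉ R T τ})
    ⟨j + T.length + 3, by omega, fun h => by have := h.2.1; omega⟩

lemma mem_R_of_lt_firstNotInR {y : ℕ} (hjy : j ≤ y) (hy : y < firstNotInR T τ j) : y ∈ R T τ :=
  not_not.1 fun h => (Nat.sInf_le (show y ∈ {j' | j ≤ j' ∧ j' ∉ R T τ} from ⟨hjy, h⟩)).not_gt hy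

lemma lt_firstNotInR (hj : j ∈ R T τ) : j < firstNotInR T τ j := by
  obtain ⟨hle, hnot⟩ := firstNotInR_mem (T := T) j
  exact hle.lt_of_ne fun h => hnot (h ▸ hj)

lemma firstNotInR_le (hj : j ∈ R T τ) : firstNotInR T τ j ≤ T.length + 3 - 3 * τ :=
  Nat.sInf_le ⟨by have := hj.2.1; omega, fun h => by have := h.2.1; omega⟩

lemma hasPeriodOn_suf (hτ : 1 ≤ τ) (hj : j ∈ R T τ) (d : ℕ) (hd : j + d < firstNotInR T τ j) :
    HasPeriodOn (suf T j) (perP τ (suf T j)) (d + (3 * τ - 1)) := by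
  have hj₁ := hj.1
  induction d with
  | zero => simpa using ((mem_R_iff hτ).1 hj).2.hasPeriodOn hτ
  | succ d ih =>
    have hW := ((mem_R_iff hτ).1 (mem_R_of_lt_firstNotInR (by omega) hd)).2
    rw [suf_add hj₁] at hW
    have := hW.2; have := ((mem_R_iff hτ).1 hj).2.2
    rw [Nat.add_right_comm]
    exact (ih (by omega)).extend (hW.hasPeriodOn hτ) (hW.perP_pos hτ) (by omega)

/-- Were the run to continue past `rend`, the window at `firstNotInR` would have period
`per` as well, putting `firstNotInR` into `R`. -/
lemma isMaximalRun_suf_rend (hτ : 1 ≤ τ) (hj : j ∈ R T τ) :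
    IsMaximalRun (suf T j) (perP τ (suf T j)) (rend T τ j - j) := by
  have hPer := ((mem_R_iff hτ).1 hj).2
  have := hPer.2; have := hPer.perP_pos hτ; have := hj.1
  have hlt := lt_firstNotInR hj
  have hle := firstNotInR_le hj
  obtain ⟨-, hnot⟩ := firstNotInR_mem (T := T) j
  have hrun := hasPeriodOn_suf hτ hj _ (show j + (firstNotInR T τ j - j - 1) < _ by omega)
  rw [show firstNotInR T τ j - j - 1 + (3 * τ - 1) = rend T τ j - j by rw [rend_eq]; omega]
    at hrun
  have hlen : (suf T j).length = T.length + 1 - j := by simp [suf]; omega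
  refine ⟨by rw [rend_eq]; omega, by rw [hlen, rend_eq]; omega, hrun, fun hlt' heq => hnot ?_⟩
  have hnext := hrun.succ (by rw [rend_eq]; omega) heq.symm
  rw [show rend T τ j - j + 1 = (firstNotInR T τ j - j) + (3 * τ - 1) by rw [rend_eq]; omega]
    at hnext
  have hwin : HasPeriodOn (suf T (firstNotInR T τ j)) (perP τ (suf T j)) (3 * τ - 1) := by
    rw [show firstNotInR T τ j = j + (firstNotInR T τ j - j) by omega, suf_add (by omega),
      hasPeriodOn_drop_iff]
    intro i hi
    exact hnext _ (by omega)
  have hlen' : 3 * τ - 1 ≤ (suf T (firstNotInR T τ j)).length := by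
    simp only [suf, List.length_drop]; rw [hlen, rend_eq] at hlt'; omega
  refine (mem_R_iff hτ).2 ⟨by omega, hlen', ?_⟩
  have := per_le (isPeriod_take hwin (by omega) (by omega) hlen')
  unfold perP; omega

lemma rend_sub_eq_pend (hτ : 1 ≤ τ) (hj : j ∈ R T τ) :
    rend T τ j - j = pend τ (suf T j) - 1 :=
  (isMaximalRun_suf_rend hτ hj).unique (((mem_R_iff hτ).1 hj).2.isMaximalRun_pend hτ)

lemma Lexp_eq (hτ : 1 ≤ τ) (hj : j ∈ R T τ) : Lexp T τ j = LexpP τ (suf T j) := by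
  unfold Lexp LexpP
  rw [per_window_eq, Lhead_eq hj.1, rend_sub_eq_pend hτ hj]

lemma typ_eq (hτ : 1 ≤ τ) (hj : j ∈ R T τ) : typ T τ j = typP τ (suf T j) := by
  have hpa := (isMaximalRun_suf_rend hτ hj).1
  have hrend := rend_sub_eq_pend hτ hj
  have := hj.1; have := ((mem_R_iff hτ).1 hj).2.le_pend hτ
  have hlen : (suf T j).length = T.length - (j - 1) := List.length_drop
  unfold typ typP idx
  rw [per_window_eq, show rend T τ j - perP τ (suf T j) - 1
      = j - 1 + (pend τ (suf T j) - perP τ (suf T j) - 1) by omega,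
    show rend T τ j - 1 = j - 1 + (pend τ (suf T j) - 1) by omega, ← getD_suf, ← getD_suf]
  congr 2
  exact propext (by omega)

end Run

section Count

variable {T P : List ℕ} {τ j : ℕ}

lemma mem_RminusSH_iff (hτ : 1 ≤ τ) {s : ℕ} {H : List ℕ} :
    j ∈ RminusSH T τ s H ↔ 1 ≤ j ∧ Periodic τ (suf T j) ∧ typP τ (suf T j) = -1 ∧
      LrootP τ (suf T j) = H ∧ LheadP τ (suf T j) = s := by
  constructor
  · rintro ⟨⟨hR, ht⟩, -, hr, hh⟩
    rw [typ_eq hτ hR] at ht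
    rw [Lroot_eq hR.1] at hr
    rw [Lhead_eq hR.1] at hh
    exact ⟨hR.1, ((mem_R_iff hτ).1 hR).2, ht, hr, hh⟩
  · rintro ⟨hj, hX, ht, hr, hh⟩
    have hR : j ∈ R T τ := (mem_R_iff hτ).2 ⟨hj, hX⟩
    exact ⟨⟨hR, (typ_eq hτ hR).trans ht⟩, hR, (Lroot_eq hj).trans hr, (Lhead_eq hj).trans hh⟩

lemma mem_delta_iff (hτ : 1 ≤ τ) (hP : Periodic τ P) (htP : typP τ P = -1) :
    (1 ≤ j ∧ j ≤ T.length ∧ 3 * τ - 1 ≤ lcp (suf T j) P ∧ suf T j < P) ↔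
      (j ∈ RminusSH T τ (LheadP τ P) (LrootP τ P) ∧ Lexp T τ j ≤ LexpP τ P) ∧
        ¬(j ∈ RminusSH T τ (LheadP τ P) (LrootP τ P) ∧ Lexp T τ j = LexpP τ P ∧
          P ≤ suf T j) := by
  rw [le_lcp_and_lt_iff hτ hP htP, mem_RminusSH_iff hτ]
  constructor
  · rintro ⟨hj, -, hmem, hexp⟩
    rw [Lexp_eq hτ ((mem_R_iff hτ).2 ⟨hj, hmem.1⟩)]
    refine ⟨⟨⟨hj, hmem⟩, hexp.elim le_of_lt fun h => h.1.le⟩, fun ⟨_, heq, hle⟩ => ?_⟩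
    exact hexp.elim heq.not_lt fun h => hle.not_gt h.2
  · rintro ⟨⟨⟨hj, hmem⟩, hle⟩, hnot⟩
    rw [Lexp_eq hτ ((mem_R_iff hτ).2 ⟨hj, hmem.1⟩)] at hle hnot
    have hlen := hmem.1.1
    simp only [suf, List.length_drop] at hlen
    refine ⟨hj, by omega, hmem, hle.lt_or_eq.imp_right fun h => ⟨h, ?_⟩⟩
    exact not_le.1 fun h' => hnot ⟨⟨hj, hmem⟩, h, h'⟩

end Count

theorem statement_16_general
    (n τ : ℕ) (T : List ℕ)
    (hτ : 1 ≤ τ)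
    (hlen : T.length = n)
    (P : List ℕ)
    (hperiodic : Periodic τ P) (htypP : typP τ P = -1)
    (s : ℕ) (hs : s = LheadP τ P) (H : List ℕ) (hH : H = LrootP τ P)
    (δ δa δs : ℕ)
    (hδ : δ = Set.ncard {j | 1 ≤ j ∧ j ≤ n ∧ 3 * τ - 1 ≤ lcp (suf T j) P ∧
      suf T j < P})
    (hδa : δa = Set.ncard {j | j ∈ RminusSH T τ s H ∧ Lexp T τ j ≤ LexpP τ P})
    (hδs : δs = Set.ncard {j | j ∈ RminusSH T τ s H ∧ Lexp T τ j = LexpP τ P ∧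
      P ≤ suf T j}) :
    (δ : ℤ) = (δa : ℤ) - (δs : ℤ) := by
  subst hs hH hδ hδa hδs hlen
  set A := {j | 1 ≤ j ∧ j ≤ T.length ∧ 3 * τ - 1 ≤ lcp (suf T j) P ∧ suf T j < P}
  set Sa := {j | j ∈ RminusSH T τ (LheadP τ P) (LrootP τ P) ∧ Lexp T τ j ≤ LexpP τ P}
  set Ss := {j | j ∈ RminusSH T τ (LheadP τ P) (LrootP τ P) ∧ Lexp T τ j = LexpP τ P ∧
    P ≤ suf T j}
  have hsub : Ss ⊆ Sa := fun j hj => ⟨hj.1, hj.2.1.le⟩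
  have hfin : Sa.Finite := (Set.finite_Icc 1 T.length).subset fun j hj => by
    obtain ⟨h₁, h₂, -⟩ := hj.1.1.1
    exact ⟨h₁, by omega⟩
  have hdiff : Sa \ Ss = A := Set.ext fun j => (mem_delta_iff hτ hperiodic htypP).symm
  have hcount := Set.ncard_sdiff_add_ncard_of_subset hsub hfin
  rw [hdiff] at hcount
  omega

/-- Lemma: `δ(P,T) = δᵃ(P,T) − δˢ(P,T)` for periodic `P` of type `−1`. -/
theorem statement_16
    (σ n τ : ℕ) (T : List ℕ)
    (hσ : 2 ≤ σ) (hn : 2 ≤ n) (hτ : 1 ≤ τ)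
    (hlen : T.length = n) (halph : ∀ c ∈ T, c < σ)
    (hlast : idx T n = 0) (huniq : ∀ i, 1 ≤ i → i < n → idx T i ≠ 0)
    (P : List ℕ) (m : ℕ) (hm : P.length = m) (halphP : ∀ c ∈ P, c < σ)
    (hperiodic : Periodic τ P) (htypP : typP τ P = -1)
    (s : ℕ) (hs : s = LheadP τ P) (H : List ℕ) (hH : H = LrootP τ P)
    (δ δa δs : ℕ)
    (hδ : δ = Set.ncard {j | 1 ≤ j ∧ j ≤ n ∧ 3 * τ - 1 ≤ lcp (suf T j) P ∧
      suf T j < P})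
    (hδa : δa = Set.ncard {j | j ∈ RminusSH T τ s H ∧ Lexp T τ j ≤ LexpP τ P})
    (hδs : δs = Set.ncard {j | j ∈ RminusSH T τ s H ∧ Lexp T τ j = LexpP τ P ∧
      P ≤ suf T j}) :
    (δ : ℤ) = (δa : ℤ) - (δs : ℤ) :=
  statement_16_general n τ T hτ hlen P hperiodic htypP s hs H hH δ δa δs hδ hδa hδs
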